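/- Let R be a commutative ring, F a formal group law over R with formal inverse ι, and H₁, H₂ ∈ R[[U,V]] the unique series of the associated 2-valued law. Write P = F(X,Y), P̂ = F(ι(X),ι(Y)), Q = F(ι(X),Y), Q̂ = F(X,ι(Y)) in R[[X,Y]]. Then the following identities hold in R[[X,Y,Z]][t]: (i) 1 + H₁(−P·ι(P), −Z·ι(Z))t + H₂(−P·ι(P), −Z·ι(Z))t² = (1 − F(P,Z)·F(P̂, ι(Z))·t)(1 − F(P̂, Z)·F(P, ι(Z))·t); and (ii) 1 + H₁(−Q·ι(Q), −Z·ι(Z))t + H₂(−Q·ι(Q), −Z·ι(Z))t² = (1 − F(Q,Z)·F(Q̂, ι(Z))·t)(1 − F(Q̂, Z)·F(Q, ι(Z))·t). (These exhibit the four formal roots of the formal ternary law W(F) obtained from F.) -/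

import Mathlib

noncomputable section

/-- The weight (total degree) of a multi-exponent. -/
def wt {τ : Type*} (d : τ →₀ ℕ) : ℕ := d.sum fun _ e => e

/-- Substitution of a family of multivariate power series (each having zero constant
coefficient) into a multivariate power series in finitely many variables.  The coefficient
of the result in multidegree `d` is computed from a sufficiently large truncation of `f`;
this agrees with the usual substitution whenever every `a i` has zero constant coefficient. -/
def msubst {R : Type*} [CommRing R] {k : ℕ} {τ : Type*}
    (a : Fin k → MvPowerSeries τ R) (f : MvPowerSeries (Fin k) R) : MvPowerSeries τ R :=
  fun d => MvPowerSeries.coeff (R := R) d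
    (MvPolynomial.eval₂ (MvPowerSeries.C (σ := τ) (R := R)) a
      (MvPowerSeries.trunc R (Finsupp.equivFunOnFinite.symm fun _ => wt d + 1) f))

/-- Substitution of a multivariate power series with zero constant coefficient into a
one-variable power series. -/
def psubst {R : Type*} [CommRing R] {τ : Type*}
    (a : MvPowerSeries τ R) (f : PowerSeries R) : MvPowerSeries τ R :=
  fun d => MvPowerSeries.coeff (R := R) d
    (Polynomial.eval₂ (MvPowerSeries.C (σ := τ) (R := R)) a (PowerSeries.trunc (wt d + 1) f))

/-- A (one-dimensional, commutative) formal group law over `R`: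
`F(X,0) = X`, `F(0,Y) = Y`, `F(X,Y) = F(Y,X)` and `F(F(X,Y),Z) = F(X,F(Y,Z))`. -/
structure IsFGL {R : Type*} [CommRing R] (F : MvPowerSeries (Fin 2) R) : Prop where
  zero_right : msubst ![MvPowerSeries.X 0, 0] F = (MvPowerSeries.X 0 : MvPowerSeries (Fin 2) R)
  zero_left : msubst ![0, MvPowerSeries.X 1] F = (MvPowerSeries.X 1 : MvPowerSeries (Fin 2) R)
  comm : msubst ![MvPowerSeries.X 1, MvPowerSeries.X 0] F = F
  assoc : msubst ![msubst ![(MvPowerSeries.X 0 : MvPowerSeries (Fin 3) R), MvPowerSeries.X 1] F,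
        MvPowerSeries.X 2] F
      = msubst ![(MvPowerSeries.X 0 : MvPowerSeries (Fin 3) R),
        msubst ![MvPowerSeries.X 1, MvPowerSeries.X 2] F] F

/-- `ι` is the formal inverse of the formal group law `F`: it is composable and
`F(X, ι(X)) = 0` in `R[[X]]`. -/
def IsFormalInverse {R : Type*} [CommRing R] (F : MvPowerSeries (Fin 2) R)
    (ι : PowerSeries R) : Prop :=
  PowerSeries.constantCoeff (R := R) ι = 0 ∧
    msubst ![(PowerSeries.X : PowerSeries R), ι] F = 0

end

/-- `ι(X)` viewed as a two-variable power series. -/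
noncomputable def iX {R : Type*} [CommRing R] (ι : PowerSeries R) : MvPowerSeries (Fin 2) R :=
  psubst (MvPowerSeries.X 0) ι

/-- `ι(Y)` viewed as a two-variable power series. -/
noncomputable def iY {R : Type*} [CommRing R] (ι : PowerSeries R) : MvPowerSeries (Fin 2) R :=
  psubst (MvPowerSeries.X 1) ι

/-- `ι` applied to the `j`-th variable, as a three-variable power series. -/
noncomputable def i3 {R : Type*} [CommRing R] (ι : PowerSeries R) (j : Fin 3) :
    MvPowerSeries (Fin 3) R :=
  psubst (MvPowerSeries.X j) ι

/-- `P = F(X,Y)` as a three-variable power series. -/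
noncomputable def P3 {R : Type*} [CommRing R] (F : MvPowerSeries (Fin 2) R) :
    MvPowerSeries (Fin 3) R :=
  msubst ![MvPowerSeries.X 0, MvPowerSeries.X 1] F

/-- `P̂ = F(ι(X),ι(Y))` as a three-variable power series. -/
noncomputable def Phat3 {R : Type*} [CommRing R] (F : MvPowerSeries (Fin 2) R)
    (ι : PowerSeries R) : MvPowerSeries (Fin 3) R :=
  msubst ![i3 ι 0, i3 ι 1] F

/-- `Q = F(ι(X),Y)` as a three-variable power series. -/
noncomputable def Q3 {R : Type*} [CommRing R] (F : MvPowerSeries (Fin 2) R)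
    (ι : PowerSeries R) : MvPowerSeries (Fin 3) R :=
  msubst ![i3 ι 0, MvPowerSeries.X 1] F

/-- `Q̂ = F(X,ι(Y))` as a three-variable power series. -/
noncomputable def Qhat3 {R : Type*} [CommRing R] (F : MvPowerSeries (Fin 2) R)
    (ι : PowerSeries R) : MvPowerSeries (Fin 3) R :=
  msubst ![MvPowerSeries.X 0, i3 ι 1] F

/-! On series with zero constant coefficient, `msubst` and `psubst` agree with Mathlib's
`MvPowerSeries.subst`, because a coefficient of a substitution only sees the coefficients of the
substituted series in lower total degree. Substitution is therefore a ring homomorphism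
compatible with composition, and the axioms of `F` hold after substituting arbitrary composable
series. By uniqueness of inverses, `ι(F(u,v)) = F(u',v')` whenever `F(u,u') = F(v,v') = 0`;
this gives `ι(P) = P̂` and `ι(Q) = Q̂`. Substituting `(P, Z)` (resp. `(Q, Z)`) for `(X, Y)` in
the identities defining `H₁` and `H₂` then exhibits the two roots of each quadratic. -/

open MvPowerSeries

section Substitution

variable {R : Type*} [CommRing R] {τ : Type*} [Finite τ] {k : ℕ} [NeZero k]

theorem MvPowerSeries.coeff_subst_congr {σ : Type*} [Finite σ] {a : σ → MvPowerSeries τ R}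
    (ha : ∀ i, constantCoeff (a i) = 0) {f g : MvPowerSeries σ R} {d : τ →₀ ℕ}
    (h : ∀ m : σ →₀ ℕ, m.degree ≤ d.degree → coeff m f = coeff m g) :
    coeff d (subst a f) = coeff d (subst a g) := by
  have hd : d.degree < d.degree + 1 := Nat.lt_succ_self _
  have htrunc : truncTotal (d.degree + 1) f = truncTotal (d.degree + 1) g := by
    ext m
    simp only [coeff_truncTotal_eq_ite, Nat.lt_succ_iff]
    split_ifs with hm
    · exact h m hm
    · rfl
  rw [← coeff_truncTotal _ hd, truncTotal_subst_eq_truncTotal_truncTotal_subst ha, htrunc,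
    ← truncTotal_subst_eq_truncTotal_truncTotal_subst ha, coeff_truncTotal _ hd]

theorem MvPowerSeries.coeff_trunc_const_of_degree_le {N : ℕ} {m : Fin k →₀ ℕ}
    (hm : m.degree ≤ N) (f : MvPowerSeries (Fin k) R) :
    (trunc R (Finsupp.equivFunOnFinite.symm fun _ => N + 1) f).coeff m = coeff m f := by
  refine (coeff_trunc _ _ f).trans (if_pos ⟨fun i => ?_, fun hle => ?_⟩)
  · have := m.le_degree i
    simp only [Finsupp.coe_equivFunOnFinite_symm]
    omega
  · have := (hle 0).trans (m.le_degree 0)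
    simp only [Finsupp.coe_equivFunOnFinite_symm] at this
    omega

theorem msubst_eq_subst {a : Fin k → MvPowerSeries τ R}
    (ha : ∀ i, constantCoeff (a i) = 0) (f : MvPowerSeries (Fin k) R) :
    msubst a f = subst a f := by
  ext d
  rw [coeff_apply]
  change coeff d (MvPolynomial.eval₂ C a (trunc R _ f)) = _
  rw [c_eq_algebraMap, ← MvPolynomial.aeval_def, ← subst_coe]
  exact coeff_subst_congr ha fun m hm => coeff_trunc_const_of_degree_le (N := wt d) hm f

theorem psubst_eq_subst {u : MvPowerSeries τ R} (hu : constantCoeff u = 0) (f : PowerSeries R) :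
    psubst u f = PowerSeries.subst u f := by
  ext d
  rw [coeff_apply]
  change coeff d (Polynomial.eval₂ C u (PowerSeries.trunc _ f)) = _
  rw [c_eq_algebraMap, ← Polynomial.aeval_def,
    ← PowerSeries.subst_coe (.of_constantCoeff_zero hu)]
  refine coeff_subst_congr (fun _ => hu) fun m hm => ?_
  obtain ⟨n, rfl⟩ : ∃ n, m = Finsupp.single () n := ⟨m (), Finsupp.unique_single m⟩
  rw [Finsupp.degree_single] at hm
  rw [← PowerSeries.coeff_def Finsupp.single_eq_same, Polynomial.coeff_coe,
    PowerSeries.coeff_trunc]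
  exact if_pos (Nat.lt_succ_of_le hm)

theorem msubst_eq_substAlgHom {a : Fin k → MvPowerSeries τ R}
    (ha : ∀ i, constantCoeff (a i) = 0) :
    msubst a = substAlgHom (R := R) (hasSubst_of_constantCoeff_zero ha) := by
  ext1 f
  rw [coe_substAlgHom, msubst_eq_subst ha]

theorem msubst_zero {a : Fin k → MvPowerSeries τ R} (ha : ∀ i, constantCoeff (a i) = 0) :
    msubst a (0 : MvPowerSeries (Fin k) R) = 0 := by
  rw [msubst_eq_substAlgHom ha, map_zero]

theorem msubst_add {a : Fin k → MvPowerSeries τ R} (ha : ∀ i, constantCoeff (a i) = 0)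
    (f g : MvPowerSeries (Fin k) R) : msubst a (f + g) = msubst a f + msubst a g := by
  rw [msubst_eq_substAlgHom ha, map_add]

theorem msubst_mul {a : Fin k → MvPowerSeries τ R} (ha : ∀ i, constantCoeff (a i) = 0)
    (f g : MvPowerSeries (Fin k) R) : msubst a (f * g) = msubst a f * msubst a g := by
  rw [msubst_eq_substAlgHom ha, map_mul]

theorem msubst_neg {a : Fin k → MvPowerSeries τ R} (ha : ∀ i, constantCoeff (a i) = 0)
    (f : MvPowerSeries (Fin k) R) : msubst a (-f) = -msubst a f := by
  rw [msubst_eq_substAlgHom ha, map_neg]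

theorem msubst_X {a : Fin k → MvPowerSeries τ R} (ha : ∀ i, constantCoeff (a i) = 0)
    (i : Fin k) : msubst a (X i) = a i := by
  rw [msubst_eq_subst ha, subst_X (hasSubst_of_constantCoeff_zero ha)]

theorem constantCoeff_msubst {a : Fin k → MvPowerSeries τ R}
    (ha : ∀ i, constantCoeff (a i) = 0) (f : MvPowerSeries (Fin k) R) :
    constantCoeff (msubst a f) = constantCoeff f := by
  rw [msubst_eq_subst ha, ← coeff_zero_eq_constantCoeff_apply,
    coeff_subst_congr ha (g := C (constantCoeff f)), subst_C, coeff_zero_C]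
  intro m hm
  rw [map_zero, Nat.le_zero, Finsupp.degree_eq_zero_iff] at hm
  rw [hm, coeff_zero_C, coeff_zero_eq_constantCoeff_apply]

theorem constantCoeff_psubst_eq_zero {u : MvPowerSeries τ R} (hu : constantCoeff u = 0)
    {f : PowerSeries R} (hf : PowerSeries.constantCoeff f = 0) :
    constantCoeff (psubst u f) = 0 := by
  rw [psubst_eq_subst hu, PowerSeries.constantCoeff_subst_eq_zero hu f hf]

theorem psubst_X {u : MvPowerSeries τ R} (hu : constantCoeff u = 0) :
    psubst u PowerSeries.X = u := by
  rw [psubst_eq_subst hu, PowerSeries.subst_X (.of_constantCoeff_zero hu)]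

theorem psubst_zero {u : MvPowerSeries τ R} (hu : constantCoeff u = 0) :
    psubst u (0 : PowerSeries R) = 0 := by
  rw [psubst_eq_subst hu, ← PowerSeries.coe_substAlgHom (.of_constantCoeff_zero hu), map_zero]

theorem msubst_msubst {l : ℕ} [NeZero l] {a : Fin k → MvPowerSeries (Fin l) R}
    {b : Fin l → MvPowerSeries τ R} (ha : ∀ i, constantCoeff (a i) = 0)
    (hb : ∀ j, constantCoeff (b j) = 0) (f : MvPowerSeries (Fin k) R) :
    msubst b (msubst a f) = msubst (fun i => msubst b (a i)) f := by
  have hba : ∀ i, constantCoeff (msubst b (a i)) = 0 := fun i => by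
    rw [constantCoeff_msubst hb, ha i]
  rw [msubst_eq_subst hba]
  simp only [msubst_eq_subst hb, msubst_eq_subst ha]
  exact subst_comp_subst_apply (hasSubst_of_constantCoeff_zero ha)
    (hasSubst_of_constantCoeff_zero hb) f

theorem msubst_msubst_pair {l : ℕ} [NeZero l] {x y : MvPowerSeries (Fin l) R}
    {b : Fin l → MvPowerSeries τ R} (hx : constantCoeff x = 0) (hy : constantCoeff y = 0)
    (hb : ∀ j, constantCoeff (b j) = 0) (f : MvPowerSeries (Fin 2) R) :
    msubst b (msubst ![x, y] f) = msubst ![msubst b x, msubst b y] f := by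
  rw [msubst_msubst (Fin.forall_fin_two.2 ⟨hx, hy⟩) hb]
  congr 1
  funext i
  fin_cases i <;> rfl

theorem msubst_psubst {l : ℕ} [NeZero l] {u : MvPowerSeries (Fin l) R}
    {b : Fin l → MvPowerSeries τ R} (hu : constantCoeff u = 0)
    (hb : ∀ j, constantCoeff (b j) = 0) (f : PowerSeries R) :
    msubst b (psubst u f) = psubst (msubst b u) f := by
  have hbu : constantCoeff (msubst b u) = 0 := by rw [constantCoeff_msubst hb, hu]
  rw [psubst_eq_subst hu, psubst_eq_subst hbu, msubst_eq_subst hb, msubst_eq_subst hb,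
    PowerSeries.subst, PowerSeries.subst,
    subst_comp_subst_apply (hasSubst_of_constantCoeff_zero fun _ => hu)
      (hasSubst_of_constantCoeff_zero hb)]

theorem psubst_msubst {w : MvPowerSeries τ R} {a : Fin k → PowerSeries R}
    (hw : constantCoeff w = 0) (ha : ∀ i, PowerSeries.constantCoeff (a i) = 0)
    (f : MvPowerSeries (Fin k) R) :
    psubst w (msubst a f) = msubst (fun i => psubst w (a i)) f := by
  have hwa : ∀ i, constantCoeff (psubst w (a i)) = 0 := fun i =>
    constantCoeff_psubst_eq_zero hw (ha i)
  rw [msubst_eq_subst hwa]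
  simp only [psubst_eq_subst hw, msubst_eq_subst ha]
  exact subst_comp_subst_apply (hasSubst_of_constantCoeff_zero ha)
    (hasSubst_of_constantCoeff_zero fun _ => hw) f

end Substitution

section FormalGroupLaw

variable {R : Type*} [CommRing R] {τ : Type*} [Finite τ] {F : MvPowerSeries (Fin 2) R}
  {u v w : MvPowerSeries τ R}

theorem IsFGL.constantCoeff_eq_zero (hF : IsFGL F) : constantCoeff F = 0 := by
  have h := congrArg constantCoeff hF.zero_right
  rwa [constantCoeff_msubst (a := ![X 0, 0])
    (Fin.forall_fin_two.2 ⟨constantCoeff_X 0, map_zero _⟩), constantCoeff_X] at h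

theorem IsFGL.constantCoeff_msubst_eq_zero (hF : IsFGL F) (hu : constantCoeff u = 0)
    (hv : constantCoeff v = 0) : constantCoeff (msubst ![u, v] F) = 0 := by
  rw [constantCoeff_msubst (Fin.forall_fin_two.2 ⟨hu, hv⟩), hF.constantCoeff_eq_zero]

theorem IsFGL.msubst_zero_right (hF : IsFGL F) (hu : constantCoeff u = 0) :
    msubst ![u, 0] F = u := by
  have hb : ∀ i, constantCoeff (![u, 0] i) = 0 := Fin.forall_fin_two.2 ⟨hu, map_zero _⟩
  have h := congrArg (msubst ![u, 0]) hF.zero_right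
  rw [msubst_msubst_pair (constantCoeff_X 0) (map_zero _) hb, msubst_X hb, msubst_zero hb] at h
  exact h

theorem IsFGL.msubst_zero_left (hF : IsFGL F) (hv : constantCoeff v = 0) :
    msubst ![0, v] F = v := by
  have hb : ∀ i, constantCoeff (![0, v] i) = 0 := Fin.forall_fin_two.2 ⟨map_zero _, hv⟩
  have h := congrArg (msubst ![0, v]) hF.zero_left
  rw [msubst_msubst_pair (map_zero _) (constantCoeff_X 1) hb, msubst_X hb, msubst_zero hb] at h
  exact h

theorem IsFGL.msubst_comm (hF : IsFGL F) (hu : constantCoeff u = 0)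
    (hv : constantCoeff v = 0) : msubst ![u, v] F = msubst ![v, u] F := by
  have hb : ∀ i, constantCoeff (![u, v] i) = 0 := Fin.forall_fin_two.2 ⟨hu, hv⟩
  have h := congrArg (msubst ![u, v]) hF.comm
  rw [msubst_msubst_pair (constantCoeff_X 1) (constantCoeff_X 0) hb, msubst_X hb,
    msubst_X hb] at h
  exact h.symm

theorem IsFGL.msubst_assoc (hF : IsFGL F) (hu : constantCoeff u = 0)
    (hv : constantCoeff v = 0) (hw : constantCoeff w = 0) :
    msubst ![msubst ![u, v] F, w] F = msubst ![u, msubst ![v, w] F] F := by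
  have hb : ∀ i, constantCoeff (![u, v, w] i) = 0 := by
    intro i
    fin_cases i <;> assumption
  have hX : ∀ j : Fin 3, constantCoeff (X j : MvPowerSeries (Fin 3) R) = 0 := constantCoeff_X
  have h := congrArg (msubst ![u, v, w]) hF.assoc
  rwa [msubst_msubst_pair (hF.constantCoeff_msubst_eq_zero (hX 0) (hX 1)) (hX 2) hb,
    msubst_msubst_pair (hX 0) (hF.constantCoeff_msubst_eq_zero (hX 1) (hX 2)) hb,
    msubst_msubst_pair (hX 0) (hX 1) hb, msubst_msubst_pair (hX 1) (hX 2) hb,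
    msubst_X hb, msubst_X hb, msubst_X hb] at h

theorem IsFGL.eq_of_msubst_eq_zero (hF : IsFGL F) (hu : constantCoeff u = 0)
    (hv : constantCoeff v = 0) (hw : constantCoeff w = 0)
    (hv₀ : msubst ![u, v] F = 0) (hw₀ : msubst ![u, w] F = 0) : v = w :=
  calc v = msubst ![v, msubst ![u, w] F] F := by rw [hw₀, hF.msubst_zero_right hv]
    _ = msubst ![msubst ![u, v] F, w] F := by
      rw [← hF.msubst_assoc hv hu hw, hF.msubst_comm hv hu]
    _ = w := by rw [hv₀, hF.msubst_zero_left hw]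

theorem IsFormalInverse.msubst_psubst_eq_zero {ι : PowerSeries R}
    (hι : IsFormalInverse F ι) (hu : constantCoeff u = 0) :
    msubst ![u, psubst u ι] F = 0 := by
  have h := congrArg (psubst u) hι.2
  rw [psubst_msubst hu (Fin.forall_fin_two.2 ⟨PowerSeries.constantCoeff_X, hι.1⟩),
    psubst_zero hu] at h
  convert h using 2
  funext i
  fin_cases i
  · exact (psubst_X hu).symm
  · rfl

theorem IsFormalInverse.psubst_msubst {ι : PowerSeries R} (hF : IsFGL F)
    (hι : IsFormalInverse F ι) {u' v' : MvPowerSeries τ R} (hu : constantCoeff u = 0)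
    (hu' : constantCoeff u' = 0) (hv : constantCoeff v = 0) (hv' : constantCoeff v' = 0)
    (hu₀ : msubst ![u, u'] F = 0) (hv₀ : msubst ![v, v'] F = 0) :
    psubst (msubst ![u, v] F) ι = msubst ![u', v'] F := by
  have huv := hF.constantCoeff_msubst_eq_zero hu hv
  refine hF.eq_of_msubst_eq_zero huv (constantCoeff_psubst_eq_zero huv hι.1)
    (hF.constantCoeff_msubst_eq_zero hu' hv') (hι.msubst_psubst_eq_zero huv) ?_
  calc msubst ![msubst ![u, v] F, msubst ![u', v'] F] F
      = msubst ![u, msubst ![v, msubst ![v', u'] F] F] F := by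
        rw [hF.msubst_assoc hu hv (hF.constantCoeff_msubst_eq_zero hu' hv'),
          hF.msubst_comm hu' hv']
    _ = 0 := by
        rw [← hF.msubst_assoc hv hv' hu', hv₀, hF.msubst_zero_left hu', hu₀]

end FormalGroupLaw

section TwoValuedLaw

variable {R : Type*} [CommRing R] {F : MvPowerSeries (Fin 2) R} {ι : PowerSeries R}

theorem psubst_P3_eq_Phat3 (hF : IsFGL F) (hι : IsFormalInverse F ι) :
    psubst (P3 F) ι = Phat3 F ι :=
  hι.psubst_msubst hF (constantCoeff_X 0) (constantCoeff_psubst_eq_zero (constantCoeff_X 0) hι.1)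
    (constantCoeff_X 1) (constantCoeff_psubst_eq_zero (constantCoeff_X 1) hι.1)
    (hι.msubst_psubst_eq_zero (constantCoeff_X 0)) (hι.msubst_psubst_eq_zero (constantCoeff_X 1))

theorem psubst_Q3_eq_Qhat3 (hF : IsFGL F) (hι : IsFormalInverse F ι) :
    psubst (Q3 F ι) ι = Qhat3 F ι := by
  have hi : constantCoeff (i3 ι 0) = 0 := constantCoeff_psubst_eq_zero (constantCoeff_X 0) hι.1
  refine hι.psubst_msubst hF hi (constantCoeff_X 0) (constantCoeff_X 1)
    (constantCoeff_psubst_eq_zero (constantCoeff_X 1) hι.1) ?_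
    (hι.msubst_psubst_eq_zero (constantCoeff_X 1))
  rw [hF.msubst_comm hi (constantCoeff_X 0)]
  exact hι.msubst_psubst_eq_zero (constantCoeff_X 0)

theorem two_valued_quadratic_factorization {τ : Type*} [Finite τ]
    {H₁ H₂ : MvPowerSeries (Fin 2) R}
    (hι : PowerSeries.constantCoeff ι = 0)
    (hH₁ : msubst ![-(X 0 * iX ι), -(X 1 * iY ι)] H₁
        = -(F * msubst ![iX ι, iY ι] F + msubst ![iX ι, X 1] F * msubst ![X 0, iY ι] F))
    (hH₂ : msubst ![-(X 0 * iX ι), -(X 1 * iY ι)] H₂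
        = F * msubst ![iX ι, iY ι] F * (msubst ![iX ι, X 1] F * msubst ![X 0, iY ι] F))
    {u z : MvPowerSeries τ R} (hu : constantCoeff u = 0) (hz : constantCoeff z = 0) :
    1 + Polynomial.C (msubst ![-(u * psubst u ι), -(z * psubst z ι)] H₁) * Polynomial.X
        + Polynomial.C (msubst ![-(u * psubst u ι), -(z * psubst z ι)] H₂) * Polynomial.X ^ 2
      = (1 - Polynomial.C (msubst ![u, z] F * msubst ![psubst u ι, psubst z ι] F) * Polynomial.X)
        * (1 - Polynomial.C (msubst ![psubst u ι, z] F * msubst ![u, psubst z ι] F)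
          * Polynomial.X) := by
  have hb : ∀ i, constantCoeff (![u, z] i) = 0 := Fin.forall_fin_two.2 ⟨hu, hz⟩
  have hX : ∀ j : Fin 2, constantCoeff (X j : MvPowerSeries (Fin 2) R) = 0 := constantCoeff_X
  have hiX : constantCoeff (iX ι) = 0 := constantCoeff_psubst_eq_zero (hX 0) hι
  have hiY : constantCoeff (iY ι) = 0 := constantCoeff_psubst_eq_zero (hX 1) hι
  have hXiX : constantCoeff (-(X 0 * iX ι)) = 0 := by
    rw [map_neg, map_mul, hX 0, zero_mul, neg_zero]
  have hXiY : constantCoeff (-(X 1 * iY ι)) = 0 := by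
    rw [map_neg, map_mul, hX 1, zero_mul, neg_zero]
  have sX : msubst ![u, z] (X 0) = u := msubst_X hb 0
  have sY : msubst ![u, z] (X 1) = z := msubst_X hb 1
  have siX : msubst ![u, z] (iX ι) = psubst u ι := by rw [iX, msubst_psubst (hX 0) hb, sX]
  have siY : msubst ![u, z] (iY ι) = psubst z ι := by rw [iY, msubst_psubst (hX 1) hb, sY]
  have h₁ := congrArg (msubst ![u, z]) hH₁
  have h₂ := congrArg (msubst ![u, z]) hH₂
  simp only [msubst_msubst_pair hXiX hXiY hb, msubst_msubst_pair hiX hiY hb,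
    msubst_msubst_pair hiX (hX 1) hb, msubst_msubst_pair (hX 0) hiY hb, msubst_neg hb,
    msubst_add hb, msubst_mul hb, sX, sY, siX, siY] at h₁ h₂
  rw [h₁, h₂]
  simp only [map_neg, map_add, map_mul]
  ring

end TwoValuedLaw

/-- formal roots of the formal ternary law `W(F)`: the two displayed
factorizations of `1 + H₁(−P·ι(P), −Z·ι(Z))t + H₂(−P·ι(P), −Z·ι(Z))t²` and of
`1 + H₁(−Q·ι(Q), −Z·ι(Z))t + H₂(−Q·ι(Q), −Z·ι(Z))t²` hold in `R[[X,Y,Z]][t]`. -/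
theorem stmt_17 {R : Type*} [CommRing R] (F : MvPowerSeries (Fin 2) R) (hF : IsFGL F)
    (ι : PowerSeries R) (hι : IsFormalInverse F ι)
    (H₁ H₂ : MvPowerSeries (Fin 2) R)
    (hH₁ : msubst ![-(MvPowerSeries.X 0 * iX ι), -(MvPowerSeries.X 1 * iY ι)] H₁
        = -(F * msubst ![iX ι, iY ι] F
            + msubst ![iX ι, MvPowerSeries.X 1] F * msubst ![MvPowerSeries.X 0, iY ι] F))
    (hH₂ : msubst ![-(MvPowerSeries.X 0 * iX ι), -(MvPowerSeries.X 1 * iY ι)] H₂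
        = F * msubst ![iX ι, iY ι] F
            * (msubst ![iX ι, MvPowerSeries.X 1] F * msubst ![MvPowerSeries.X 0, iY ι] F)) :
    (1 + Polynomial.C (msubst ![-(P3 F * psubst (P3 F) ι),
          -(MvPowerSeries.X 2 * i3 ι 2)] H₁) * Polynomial.X
        + Polynomial.C (msubst ![-(P3 F * psubst (P3 F) ι),
          -(MvPowerSeries.X 2 * i3 ι 2)] H₂) * Polynomial.X ^ 2
      = (1 - Polynomial.C (msubst ![P3 F, MvPowerSeries.X 2] F
            * msubst ![Phat3 F ι, i3 ι 2] F) * Polynomial.X)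
        * (1 - Polynomial.C (msubst ![Phat3 F ι, MvPowerSeries.X 2] F
            * msubst ![P3 F, i3 ι 2] F) * Polynomial.X)) ∧
    (1 + Polynomial.C (msubst ![-(Q3 F ι * psubst (Q3 F ι) ι),
          -(MvPowerSeries.X 2 * i3 ι 2)] H₁) * Polynomial.X
        + Polynomial.C (msubst ![-(Q3 F ι * psubst (Q3 F ι) ι),
          -(MvPowerSeries.X 2 * i3 ι 2)] H₂) * Polynomial.X ^ 2
      = (1 - Polynomial.C (msubst ![Q3 F ι, MvPowerSeries.X 2] F
            * msubst ![Qhat3 F ι, i3 ι 2] F) * Polynomial.X)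
        * (1 - Polynomial.C (msubst ![Qhat3 F ι, MvPowerSeries.X 2] F
            * msubst ![Q3 F ι, i3 ι 2] F) * Polynomial.X)) := by
  have hP : constantCoeff (P3 F) = 0 :=
    hF.constantCoeff_msubst_eq_zero (constantCoeff_X 0) (constantCoeff_X 1)
  have hQ : constantCoeff (Q3 F ι) = 0 := hF.constantCoeff_msubst_eq_zero
    (constantCoeff_psubst_eq_zero (constantCoeff_X 0) hι.1) (constantCoeff_X 1)
  constructor
  · rw [← psubst_P3_eq_Phat3 hF hι]
    exact two_valued_quadratic_factorization hι.1 hH₁ hH₂ hP (constantCoeff_X 2)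
  · rw [← psubst_Q3_eq_Qhat3 hF hι]
    exact two_valued_quadratic_factorization hι.1 hH₁ hH₂ hQ (constantCoeff_X 2)
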